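/- arXiv:math/0610030 — 3 statements merged into one kernel-verified Lean document; each statement's English description precedes it below -/
import Mathlib

section
/- Let τ₀ and τ₁ be nonempty words over the positive integers and let f₁, f₂ ∈ {R, I} be trivial bijections. Then the multi-pattern τ₀-τ₁ is equivalent to the multi-pattern f₁(τ₀)-f₂(τ₁); that is, for every finite set A of positive integers and all n, m ≥ 0, |C_{n;m}^A(τ₀-τ₁)| = |C_{n;m}^A(f₁(τ₀)-f₂(τ₁))|. -/
open scoped Classical

/-- A composition of `n` with `m` parts, all parts in `A`. -/
def IsCompOf (A : Finset ℕ) (n m : ℕ) (σ : List ℕ) : Prop :=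
  (∀ x ∈ σ, x ∈ A) ∧ σ.sum = n ∧ σ.length = m

/-- The contiguous factor of `σ` of length `w.length` starting at position `i` is
order-isomorphic to the word `w`. -/
def WordIsoAt (w σ : List ℕ) (i : ℕ) : Prop :=
  i + w.length ≤ σ.length ∧ ∀ s t : ℕ, s < w.length → t < w.length →
    (w.getD s 0 < w.getD t 0 ↔ σ.getD (i + s) 0 < σ.getD (i + t) 0)

/-- An occurrence of the multi-pattern `ws 0 - ws 1 - ⋯ - ws (s-1)` in `σ`:
contiguous factors, the `i`-th order-isomorphic to `ws i` and starting at `st i`,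
each ending strictly before the next begins. -/
def MultiOccurs {s : ℕ} (ws : Fin s → List ℕ) (σ : List ℕ) : Prop :=
  ∃ st : Fin s → ℕ,
    (∀ i : Fin s, WordIsoAt (ws i) σ (st i)) ∧
    ∀ i j : Fin s, i < j → st i + (ws i).length ≤ st j

/-! ### Auxiliary definitions -/

/-- `σ` contains an occurrence of the consecutive pattern `τ`. -/
def PContains (τ σ : List ℕ) : Prop := ∃ i, WordIsoAt τ σ i

/-- Occurrence of the two-block multi-pattern `τ-φ`. -/
def MP (τ φ σ : List ℕ) : Prop :=
  ∃ i j, WordIsoAt τ σ i ∧ WordIsoAt φ σ j ∧ i + τ.length ≤ j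

lemma multiOccurs_pair (a b σ : List ℕ) : MultiOccurs ![a, b] σ ↔ MP a b σ := by
  constructor
  · rintro ⟨st, h1, h2⟩
    exact ⟨st 0, st 1, by simpa using h1 0, by simpa using h1 1,
      by simpa using h2 0 1 (by decide)⟩
  · rintro ⟨i, j, h1, h2, h3⟩
    refine ⟨![i, j], ?_, ?_⟩
    · intro x; fin_cases x <;> simpa
    · intro x y hxy; fin_cases x <;> fin_cases y <;>
        simp_all <;> omega

/-! ### `getD` helpers -/

lemma getD_append_left' {u v : List ℕ} {t : ℕ} (h : t < u.length) :
    (u ++ v).getD t 0 = u.getD t 0 := by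
  rw [List.getD_eq_getElem _ _ (by simp; omega), List.getD_eq_getElem _ _ h,
    List.getElem_append_left h]

lemma getD_append_right' {u v : List ℕ} {q : ℕ} :
    (u ++ v).getD (u.length + q) 0 = v.getD q 0 := by
  rcases lt_or_ge q v.length with h | h
  · rw [List.getD_eq_getElem _ _ (by simp; omega), List.getD_eq_getElem _ _ h,
      List.getElem_append_right (by omega)]
    congr 1; omega
  · rw [List.getD_eq_default _ _ (by simp; omega), List.getD_eq_default _ _ h]

lemma getD_take' {σ : List ℕ} {j t : ℕ} (h : t < j) :
    (σ.take j).getD t 0 = σ.getD t 0 := by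
  rcases lt_or_ge t σ.length with h2 | h2
  · rw [List.getD_eq_getElem _ _ (by simp; omega), List.getD_eq_getElem _ _ h2]
    exact List.getElem_take
  · rw [List.getD_eq_default _ _ (by simp; omega), List.getD_eq_default _ _ h2]

lemma getD_drop' {σ : List ℕ} {j q : ℕ} :
    (σ.drop j).getD q 0 = σ.getD (j + q) 0 := by
  rcases lt_or_ge (j + q) σ.length with h | h
  · rw [List.getD_eq_getElem _ _ (by simp; omega), List.getD_eq_getElem _ _ h]
    exact List.getElem_drop
  · rw [List.getD_eq_default _ _ (by simp; omega), List.getD_eq_default _ _ h]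

lemma getD_reverse' {l : List ℕ} {s : ℕ} (h : s < l.length) :
    l.reverse.getD s 0 = l.getD (l.length - 1 - s) 0 := by
  rw [List.getD_eq_getElem _ _ (by simpa using h), List.getD_eq_getElem _ _ (by omega)]
  exact List.getElem_reverse _

/-! ### `WordIsoAt` transfer lemmas -/

lemma wordIsoAt_congr {w σ σ' : List ℕ} {i : ℕ} (hl : σ.length = σ'.length)
    (h : ∀ t, i ≤ t → t < i + w.length → σ.getD t 0 = σ'.getD t 0) :
    WordIsoAt w σ i ↔ WordIsoAt w σ' i := by
  constructor
  · rintro ⟨hb, hiso⟩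
    refine ⟨by omega, fun s t hs ht => ?_⟩
    rw [← h (i + s) (by omega) (by omega), ← h (i + t) (by omega) (by omega)]
    exact hiso s t hs ht
  · rintro ⟨hb, hiso⟩
    refine ⟨by omega, fun s t hs ht => ?_⟩
    rw [h (i + s) (by omega) (by omega), h (i + t) (by omega) (by omega)]
    exact hiso s t hs ht

lemma wordIsoAt_reverse {τ σ : List ℕ} {i : ℕ} (h : WordIsoAt τ σ i) :
    WordIsoAt τ.reverse σ.reverse (σ.length - (i + τ.length)) := by
  obtain ⟨hb, hiso⟩ := h
  refine ⟨by simp; omega, fun s t hs ht => ?_⟩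
  simp only [List.length_reverse] at hs ht
  rw [getD_reverse' hs, getD_reverse' ht,
    getD_reverse' (show σ.length - (i + τ.length) + s < σ.length by omega),
    getD_reverse' (show σ.length - (i + τ.length) + t < σ.length by omega)]
  have e1 : σ.length - 1 - (σ.length - (i + τ.length) + s) = i + (τ.length - 1 - s) := by omega
  have e2 : σ.length - 1 - (σ.length - (i + τ.length) + t) = i + (τ.length - 1 - t) := by omega
  rw [e1, e2]
  exact hiso _ _ (by omega) (by omega)

lemma pContains_reverse {τ σ : List ℕ} : PContains τ σ ↔ PContains τ.reverse σ.reverse := by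
  constructor
  · rintro ⟨i, hi⟩; exact ⟨_, wordIsoAt_reverse hi⟩
  · rintro ⟨i, hi⟩
    have h2 := wordIsoAt_reverse hi
    rw [List.reverse_reverse, List.reverse_reverse] at h2
    exact ⟨_, h2⟩

lemma wordIsoAt_take {τ σ : List ℕ} {j i : ℕ} (hj : j ≤ σ.length) :
    WordIsoAt τ (σ.take j) i ↔ WordIsoAt τ σ i ∧ i + τ.length ≤ j := by
  have hlen : (σ.take j).length = j := by simp [hj]
  constructor
  · rintro ⟨hb, hiso⟩
    rw [hlen] at hb
    refine ⟨⟨by omega, fun s t hs ht => ?_⟩, hb⟩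
    rw [← getD_take' (show i + s < j by omega), ← getD_take' (show i + t < j by omega)]
    exact hiso s t hs ht
  · rintro ⟨⟨hb, hiso⟩, hle⟩
    refine ⟨by omega, fun s t hs ht => ?_⟩
    rw [getD_take' (show i + s < j by omega), getD_take' (show i + t < j by omega)]
    exact hiso s t hs ht

/-! ### The prefix-reversing involution -/

/-- Largest starting position of an occurrence of `φ` in `σ`. -/
noncomputable def maxStart (φ σ : List ℕ) : ℕ :=
  Nat.findGreatest (fun i => WordIsoAt φ σ i) σ.length

lemma maxStart_spec {φ σ : List ℕ} (h : PContains φ σ) : WordIsoAt φ σ (maxStart φ σ) := by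
  obtain ⟨i, hi⟩ := h
  exact Nat.findGreatest_spec (le_trans (Nat.le_add_right _ _) hi.1) hi

lemma le_maxStart {φ σ : List ℕ} {p : ℕ} (hp : WordIsoAt φ σ p) : p ≤ maxStart φ σ :=
  Nat.le_findGreatest (le_trans (Nat.le_add_right _ _) hp.1) hp

lemma maxStart_le {φ σ : List ℕ} : maxStart φ σ ≤ σ.length := Nat.findGreatest_le _

/-- The involution: reverse the prefix ending just before the last occurrence of `φ`. -/
noncomputable def Fmap (φ σ : List ℕ) : List ℕ :=
  if PContains φ σ then (σ.take (maxStart φ σ)).reverse ++ σ.drop (maxStart φ σ) else σ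

lemma fmap_perm (φ σ : List ℕ) : (Fmap φ σ).Perm σ := by
  unfold Fmap
  split
  · have h1 : ((σ.take (maxStart φ σ)).reverse ++ σ.drop (maxStart φ σ)).Perm
        (σ.take (maxStart φ σ) ++ σ.drop (maxStart φ σ)) :=
      (List.reverse_perm _).append_right _
    simpa [List.take_append_drop] using h1
  · exact List.Perm.refl σ

lemma fmap_length (φ σ : List ℕ) : (Fmap φ σ).length = σ.length :=
  (fmap_perm φ σ).length_eq

lemma fmap_getD_ge {φ σ : List ℕ} (hc : PContains φ σ) {t : ℕ} (ht : maxStart φ σ ≤ t) :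
    (Fmap φ σ).getD t 0 = σ.getD t 0 := by
  have hle : maxStart φ σ ≤ σ.length := maxStart_le
  have hlen : ((σ.take (maxStart φ σ)).reverse).length = maxStart φ σ := by simp [hle]
  rw [Fmap, if_pos hc]
  have : t = ((σ.take (maxStart φ σ)).reverse).length + (t - maxStart φ σ) := by omega
  rw [this, getD_append_right', getD_drop']
  congr 1; omega

lemma fmap_wordIsoAt_ge {φ σ w : List ℕ} (hc : PContains φ σ) {p : ℕ} (hp : maxStart φ σ ≤ p) :
    WordIsoAt w (Fmap φ σ) p ↔ WordIsoAt w σ p :=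
  wordIsoAt_congr (fmap_length φ σ) (fun t ht _ => fmap_getD_ge hc (le_trans hp ht))

lemma fmap_pContains {φ σ : List ℕ} (hc : PContains φ σ) : PContains φ (Fmap φ σ) :=
  ⟨maxStart φ σ, (fmap_wordIsoAt_ge hc le_rfl).mpr (maxStart_spec hc)⟩

lemma fmap_maxStart {φ σ : List ℕ} (hc : PContains φ σ) :
    maxStart φ (Fmap φ σ) = maxStart φ σ := by
  have h1 : maxStart φ σ ≤ maxStart φ (Fmap φ σ) :=
    le_maxStart ((fmap_wordIsoAt_ge hc le_rfl).mpr (maxStart_spec hc))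
  have h2 : WordIsoAt φ (Fmap φ σ) (maxStart φ (Fmap φ σ)) := maxStart_spec (fmap_pContains hc)
  have h3 : WordIsoAt φ σ (maxStart φ (Fmap φ σ)) := (fmap_wordIsoAt_ge hc h1).mp h2
  exact le_antisymm (le_maxStart h3) h1

lemma fmap_take {φ σ : List ℕ} (hc : PContains φ σ) :
    (Fmap φ σ).take (maxStart φ σ) = (σ.take (maxStart φ σ)).reverse := by
  rw [Fmap, if_pos hc]
  exact List.take_left' (by simp [maxStart_le])

lemma fmap_drop {φ σ : List ℕ} (hc : PContains φ σ) :
    (Fmap φ σ).drop (maxStart φ σ) = σ.drop (maxStart φ σ) := by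
  rw [Fmap, if_pos hc]
  exact List.drop_left' (by simp [maxStart_le])

lemma fmap_involutive (φ : List ℕ) : Function.Involutive (Fmap φ) := by
  intro σ
  by_cases hc : PContains φ σ
  · have hc' := fmap_pContains hc
    rw [Fmap, if_pos hc', fmap_maxStart hc, fmap_take hc, fmap_drop hc,
      List.reverse_reverse, List.take_append_drop]
  · have h : Fmap φ σ = σ := by rw [Fmap, if_neg hc]
    rw [h, h]

/-! ### Reduction of the multi-pattern to the prefix -/

lemma mp_iff_pContains_take {τ φ σ : List ℕ} (hc : PContains φ σ) :
    MP τ φ σ ↔ PContains τ (σ.take (maxStart φ σ)) := by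
  constructor
  · rintro ⟨i, j, hi, hj, hle⟩
    have hj' : j ≤ maxStart φ σ := le_maxStart hj
    exact ⟨i, (wordIsoAt_take maxStart_le).mpr ⟨hi, by omega⟩⟩
  · rintro ⟨i, hi⟩
    rw [wordIsoAt_take maxStart_le] at hi
    exact ⟨i, maxStart φ σ, hi.1, maxStart_spec hc, hi.2⟩

lemma mp_fmap (τ φ σ : List ℕ) : MP τ φ σ ↔ MP τ.reverse φ (Fmap φ σ) := by
  by_cases hc : PContains φ σ
  · have hc' := fmap_pContains hc
    rw [mp_iff_pContains_take hc, mp_iff_pContains_take hc', fmap_maxStart hc,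
      fmap_take hc, ← pContains_reverse]
  · have h : Fmap φ σ = σ := by rw [Fmap, if_neg hc]
    rw [h]
    constructor <;> rintro ⟨i, j, _, hj, _⟩ <;> exact absurd ⟨j, hj⟩ hc

lemma mp_reverse (τ φ σ : List ℕ) : MP τ φ σ ↔ MP φ.reverse τ.reverse σ.reverse := by
  have fwd : ∀ τ φ σ : List ℕ, MP τ φ σ → MP φ.reverse τ.reverse σ.reverse := by
    rintro τ φ σ ⟨i, j, hi, hj, hle⟩
    refine ⟨σ.length - (j + φ.length), σ.length - (i + τ.length),
      wordIsoAt_reverse hj, wordIsoAt_reverse hi, ?_⟩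
    have h1 : j + φ.length ≤ σ.length := hj.1
    have h2 : i + τ.length ≤ σ.length := hi.1
    simp only [List.length_reverse]
    omega
  constructor
  · exact fwd τ φ σ
  · intro h
    have := fwd _ _ _ h
    simpa using this

/-! ### Counting -/

lemma isCompOf_perm {A : Finset ℕ} {n m : ℕ} {σ σ' : List ℕ} (h : σ.Perm σ') :
    IsCompOf A n m σ ↔ IsCompOf A n m σ' := by
  unfold IsCompOf
  rw [h.length_eq, h.sum_eq]
  constructor <;> rintro ⟨h1, h2, h3⟩ <;> exact ⟨fun x hx => h1 x (by
    first
      | exact h.mem_iff.mpr hx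
      | exact h.mem_iff.mp hx), h2, h3⟩

lemma ncard_eq_of_involutive {F : List ℕ → List ℕ} (hF : Function.Involutive F)
    {S T : Set (List ℕ)} (h : ∀ σ, σ ∈ S ↔ F σ ∈ T) : S.ncard = T.ncard := by
  have himg : F '' S = T := by
    ext x
    constructor
    · rintro ⟨σ, hσ, rfl⟩; exact (h σ).mp hσ
    · intro hx
      refine ⟨F x, ?_, hF x⟩
      rw [h (F x), hF x]
      exact hx
  rw [← himg]
  exact (Set.ncard_image_of_injective S hF.injective).symm

/-- `e A n m a b` is the avoidance count. -/
noncomputable def eCnt (A : Finset ℕ) (n m : ℕ) (a b : List ℕ) : ℕ :=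
  Set.ncard {σ : List ℕ | IsCompOf A n m σ ∧ ¬ MP a b σ}

lemma eCnt_F (A : Finset ℕ) (n m : ℕ) (a b : List ℕ) :
    eCnt A n m a b = eCnt A n m a.reverse b := by
  refine ncard_eq_of_involutive (fmap_involutive b) (fun σ => ?_)
  simp only [Set.mem_setOf_eq]
  rw [isCompOf_perm (fmap_perm b σ).symm, mp_fmap a b σ]

lemma eCnt_rev (A : Finset ℕ) (n m : ℕ) (a b : List ℕ) :
    eCnt A n m a b = eCnt A n m b.reverse a.reverse := by
  refine ncard_eq_of_involutive List.reverse_involutive (fun σ => ?_)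
  simp only [Set.mem_setOf_eq]
  rw [isCompOf_perm (List.reverse_perm σ).symm, mp_reverse a b σ]

lemma eCnt_swap (A : Finset ℕ) (n m : ℕ) (a b : List ℕ) :
    eCnt A n m a b = eCnt A n m b a := by
  calc eCnt A n m a b = eCnt A n m a.reverse b := eCnt_F _ _ _ _ _
    _ = eCnt A n m b.reverse a.reverse.reverse := eCnt_rev _ _ _ _ _
    _ = eCnt A n m b.reverse a := by rw [List.reverse_reverse]
    _ = eCnt A n m b.reverse.reverse a := eCnt_F _ _ _ _ _
    _ = eCnt A n m b a := by rw [List.reverse_reverse]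

theorem stmt12 (τ₀ τ₁ : List ℕ) (hτ₀ : τ₀ ≠ []) (hτ₁ : τ₁ ≠ [])
    (hτ₀pos : ∀ x ∈ τ₀, 0 < x) (hτ₁pos : ∀ x ∈ τ₁, 0 < x)
    (f₁ f₂ : List ℕ → List ℕ)
    (hf₁ : f₁ = List.reverse ∨ f₁ = id) (hf₂ : f₂ = List.reverse ∨ f₂ = id) :
    ∀ (A : Finset ℕ), (∀ a ∈ A, 0 < a) → ∀ n m : ℕ,
      Set.ncard {σ : List ℕ | IsCompOf A n m σ ∧ ¬ MultiOccurs ![τ₀, τ₁] σ}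
        = Set.ncard {σ : List ℕ | IsCompOf A n m σ ∧ ¬ MultiOccurs ![f₁ τ₀, f₂ τ₁] σ} := by
  intro A _ n m
  have hset : ∀ a b : List ℕ,
      Set.ncard {σ : List ℕ | IsCompOf A n m σ ∧ ¬ MultiOccurs ![a, b] σ} = eCnt A n m a b := by
    intro a b
    unfold eCnt
    congr 1
    ext σ
    simp [multiOccurs_pair]
  rw [hset τ₀ τ₁, hset (f₁ τ₀) (f₂ τ₁)]
  rcases hf₁ with rfl | rfl <;> rcases hf₂ with rfl | rfl
  · -- R, R
    calc eCnt A n m τ₀ τ₁ = eCnt A n m τ₁ τ₀ := eCnt_swap _ _ _ _ _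
      _ = eCnt A n m τ₀.reverse τ₁.reverse := by
        rw [eCnt_rev A n m τ₁ τ₀]
  · -- R, id
    simpa using eCnt_F A n m τ₀ τ₁
  · -- id, R
    show eCnt A n m τ₀ τ₁ = eCnt A n m τ₀ τ₁.reverse
    calc eCnt A n m τ₀ τ₁ = eCnt A n m τ₁ τ₀ := eCnt_swap _ _ _ _ _
      _ = eCnt A n m τ₀.reverse τ₁.reverse := by rw [eCnt_rev A n m τ₁ τ₀]
      _ = eCnt A n m τ₀.reverse.reverse τ₁.reverse := eCnt_F _ _ _ _ _
      _ = eCnt A n m τ₀ τ₁.reverse := by rw [List.reverse_reverse]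
  · -- id, id
    rfl
end

section
/- Let τ₁,…,τ_s be nonempty words over the positive integers and let π be a permutation of {1,…,s}. Then the multi-patterns τ₁-τ₂-⋯-τ_s and τ_{π(1)}-τ_{π(2)}-⋯-τ_{π(s)} are equivalent; that is, for every finite set A of positive integers and all n, m ≥ 0, |C_{n;m}^A(τ₁-⋯-τ_s)| = |C_{n;m}^A(τ_{π(1)}-⋯-τ_{π(s)})|. -/
/-!
An occurrence of `τ₁-⋯-τ_s` can be found greedily from the left: `σ` contains the pattern iff
it factors as `σ = P₁ ⋯ P_s S` where `τ_i` occurs in `P_i` only as its final factor, and this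
factorization is unique. Permuting the blocks `P_i` is then a bijection from the words containing
`τ₁-⋯-τ_s` onto those containing `τ_{π(1)}-⋯-τ_{π(s)}`. It only rearranges letters, so it
preserves weight, number of parts and the set of parts; taking complements inside the finite set
of compositions gives the claim.
-/

section WordIsoAt

variable {w α β : List ℕ}

theorem wordIsoAt_append_left {i : ℕ} (h : i + w.length ≤ α.length) :
    WordIsoAt w (α ++ β) i ↔ WordIsoAt w α i := by
  have hget : ∀ t < w.length, (α ++ β).getD (i + t) 0 = α.getD (i + t) 0 :=
    fun t ht => List.getD_append _ _ _ _ (by omega)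
  unfold WordIsoAt
  refine and_congr (by simp only [List.length_append]; omega) ?_
  refine forall₄_congr fun s t hs ht => ?_
  rw [hget s hs, hget t ht]

theorem wordIsoAt_append_right {j : ℕ} :
    WordIsoAt w (α ++ β) (α.length + j) ↔ WordIsoAt w β j := by
  have hget : ∀ t, (α ++ β).getD (α.length + j + t) 0 = β.getD (j + t) 0 := fun t => by
    rw [List.getD_append_right _ _ _ _ (by omega)]
    congr 1
    omega
  unfold WordIsoAt
  refine and_congr (by simp only [List.length_append]; omega) ?_
  refine forall₄_congr fun s t _ _ => ?_
  rw [hget s, hget t]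

theorem wordIsoAt_take_iff {σ : List ℕ} {b i : ℕ} (hb : b ≤ σ.length) (h : i + w.length ≤ b) :
    WordIsoAt w (σ.take b) i ↔ WordIsoAt w σ i := by
  conv_rhs => rw [← List.take_append_drop b σ]
  exact (wordIsoAt_append_left (by rw [List.length_take]; omega)).symm

end WordIsoAt

theorem multiOccurs_append_left {s : ℕ} {ws : Fin s → List ℕ} (α : List ℕ) {β : List ℕ}
    (h : MultiOccurs ws β) : MultiOccurs ws (α ++ β) := by
  obtain ⟨st, hiso, hsep⟩ := h
  refine ⟨fun i => α.length + st i, fun i => wordIsoAt_append_right.2 (hiso i),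
    fun i j hij => ?_⟩
  have := hsep i j hij
  show α.length + st i + _ ≤ α.length + st j
  omega

theorem multiOccurs_succ_iff {s : ℕ} {ws : Fin (s + 1) → List ℕ} {σ : List ℕ} :
    MultiOccurs ws σ ↔ ∃ α β, σ = α ++ β ∧ (∃ i, WordIsoAt (ws 0) α i) ∧
      MultiOccurs (Fin.tail ws) β := by
  constructor
  · rintro ⟨st, hiso, hsep⟩
    set b := st 0 + (ws 0).length
    have hb : b ≤ σ.length := (hiso 0).1
    have hlen : (σ.take b).length = b := by rw [List.length_take]; omega
    have hafter : ∀ k : Fin s, b ≤ st k.succ := fun k => hsep 0 k.succ k.succ_pos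
    refine ⟨σ.take b, σ.drop b, (List.take_append_drop b σ).symm,
      ⟨st 0, (wordIsoAt_take_iff hb le_rfl).2 (hiso 0)⟩,
      fun k => st k.succ - b, fun k => ?_, fun k l hkl => ?_⟩
    · have h : WordIsoAt (ws k.succ) (σ.take b ++ σ.drop b)
          ((σ.take b).length + (st k.succ - b)) := by
        rw [List.take_append_drop, hlen, Nat.add_sub_of_le (hafter k)]
        exact hiso k.succ
      exact wordIsoAt_append_right.1 h
    · have := hsep k.succ l.succ (Fin.succ_lt_succ_iff.2 hkl)
      have := hafter k
      simp only [Fin.tail]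
      omega
  · rintro ⟨α, β, rfl, ⟨i, hi⟩, st, hiso, hsep⟩
    have hi_end : i + (ws 0).length ≤ α.length := hi.1
    refine ⟨Fin.cons i fun k => α.length + st k, fun k => ?_, fun k l hkl => ?_⟩
    · rcases Fin.eq_zero_or_eq_succ k with rfl | ⟨k, rfl⟩
      · exact (wordIsoAt_append_left hi_end).2 hi
      · exact wordIsoAt_append_right.2 (hiso k)
    · rcases Fin.eq_zero_or_eq_succ l with rfl | ⟨l, rfl⟩
      · exact absurd hkl (Fin.not_lt_zero k)
      rcases Fin.eq_zero_or_eq_succ k with rfl | ⟨k, rfl⟩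
      · simp only [Fin.cons_zero, Fin.cons_succ]
        omega
      · have := hsep k l (Fin.succ_lt_succ_iff.1 hkl)
        simp only [Fin.cons_succ, Fin.tail] at this ⊢
        omega

def OccursOnlyAtEnd (w P : List ℕ) : Prop :=
  w.length ≤ P.length ∧ ∀ i, WordIsoAt w P i ↔ i + w.length = P.length

theorem OccursOnlyAtEnd.exists_wordIsoAt {w P : List ℕ} (h : OccursOnlyAtEnd w P) :
    ∃ i, WordIsoAt w P i :=
  ⟨P.length - w.length, (h.2 _).2 (by have := h.1; omega)⟩

theorem exists_occursOnlyAtEnd_append {w α : List ℕ} (h : ∃ i, WordIsoAt w α i) :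
    ∃ α₁ α₂, OccursOnlyAtEnd w α₁ ∧ α = α₁ ++ α₂ := by
  classical
  set i₀ := Nat.find h
  have hb : i₀ + w.length ≤ α.length := (Nat.find_spec h).1
  have hlen : (α.take (i₀ + w.length)).length = i₀ + w.length := by
    rw [List.length_take]; omega
  refine ⟨α.take (i₀ + w.length), α.drop (i₀ + w.length), ⟨by omega, fun j => ?_⟩,
    (List.take_append_drop _ α).symm⟩
  rw [hlen]
  constructor
  · intro hj
    have hj_end : j + w.length ≤ i₀ + w.length := hlen ▸ hj.1
    have := Nat.find_min' h ((wordIsoAt_take_iff hb hj_end).1 hj)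
    omega
  · intro hj
    obtain rfl : j = i₀ := by omega
    exact (wordIsoAt_take_iff hb le_rfl).2 (Nat.find_spec h)

theorem multiOccurs_succ_iff_occursOnlyAtEnd {s : ℕ} {ws : Fin (s + 1) → List ℕ}
    {σ : List ℕ} :
    MultiOccurs ws σ ↔ ∃ α β, OccursOnlyAtEnd (ws 0) α ∧ MultiOccurs (Fin.tail ws) β ∧
      σ = α ++ β := by
  rw [multiOccurs_succ_iff]
  constructor
  · rintro ⟨α, β, rfl, hocc, hβ⟩
    obtain ⟨α₁, α₂, hα₁, rfl⟩ := exists_occursOnlyAtEnd_append hocc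
    exact ⟨α₁, α₂ ++ β, hα₁, multiOccurs_append_left α₂ hβ, List.append_assoc _ _ _⟩
  · rintro ⟨α, β, hα, hβ, rfl⟩
    exact ⟨α, β, rfl, hα.exists_wordIsoAt, hβ⟩

theorem OccursOnlyAtEnd.length_eq_of_append_eq {w α α' β β' : List ℕ}
    (hα : OccursOnlyAtEnd w α) (hα' : OccursOnlyAtEnd w α') (he : α ++ β = α' ++ β')
    (hle : α.length ≤ α'.length) : α.length = α'.length := by
  have hocc : WordIsoAt w α (α.length - w.length) := (hα.2 _).2 (by have := hα.1; omega)
  rw [← wordIsoAt_append_left (β := β) hocc.1, he,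
    wordIsoAt_append_left (by have := hα.1; omega), hα'.2] at hocc
  have := hα.1
  omega

theorem OccursOnlyAtEnd.append_inj {w α α' β β' : List ℕ}
    (hα : OccursOnlyAtEnd w α) (hα' : OccursOnlyAtEnd w α') (he : α ++ β = α' ++ β') :
    α = α' ∧ β = β' := by
  refine List.append_inj he ?_
  rcases le_total α.length α'.length with hle | hle
  · exact hα.length_eq_of_append_eq hα' he hle
  · exact (hα'.length_eq_of_append_eq hα he.symm hle).symm

def joinBlocks {s : ℕ} (P : Fin s → List ℕ) (S : List ℕ) : List ℕ :=
  (List.ofFn P).flatten ++ S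

theorem joinBlocks_succ {s : ℕ} (P : Fin (s + 1) → List ℕ) (S : List ℕ) :
    joinBlocks P S = P 0 ++ joinBlocks (Fin.tail P) S := by
  simp only [joinBlocks, List.ofFn_succ, List.flatten_cons, List.append_assoc]
  rfl

theorem joinBlocks_comp_perm {s : ℕ} (P : Fin s → List ℕ) (S : List ℕ)
    (π : Equiv.Perm (Fin s)) : (joinBlocks (P ∘ π) S).Perm (joinBlocks P S) :=
  ((π.ofFn_comp_perm P).flatten).append_right S

theorem multiOccurs_iff_exists_joinBlocks {s : ℕ} {ws : Fin s → List ℕ} {σ : List ℕ} :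
    MultiOccurs ws σ ↔
      ∃ P S, (∀ i, OccursOnlyAtEnd (ws i) (P i)) ∧ σ = joinBlocks P S := by
  induction s generalizing σ with
  | zero =>
    exact ⟨fun _ => ⟨finZeroElim, σ, finZeroElim, rfl⟩,
      fun _ => ⟨finZeroElim, finZeroElim, finZeroElim⟩⟩
  | succ s ih =>
    rw [multiOccurs_succ_iff_occursOnlyAtEnd]
    constructor
    · rintro ⟨α, β, hα, hβ, rfl⟩
      obtain ⟨P, S, hP, rfl⟩ := ih.1 hβ
      refine ⟨Fin.cons α P, S, Fin.cases hα hP, ?_⟩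
      rw [joinBlocks_succ, Fin.cons_zero, Fin.tail_cons]
    · rintro ⟨P, S, hP, rfl⟩
      exact ⟨P 0, joinBlocks (Fin.tail P) S, hP 0,
        ih.2 ⟨Fin.tail P, S, fun i => hP i.succ, rfl⟩, joinBlocks_succ P S⟩

theorem joinBlocks_inj {s : ℕ} {ws P Q : Fin s → List ℕ} {S T : List ℕ}
    (hP : ∀ i, OccursOnlyAtEnd (ws i) (P i)) (hQ : ∀ i, OccursOnlyAtEnd (ws i) (Q i))
    (h : joinBlocks P S = joinBlocks Q T) : P = Q ∧ S = T := by
  induction s with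
  | zero => exact ⟨funext finZeroElim, h⟩
  | succ s ih =>
    rw [joinBlocks_succ, joinBlocks_succ] at h
    obtain ⟨h₀, h⟩ := (hP 0).append_inj (hQ 0) h
    obtain ⟨htail, hST⟩ := ih (fun i => hP i.succ) (fun i => hQ i.succ) h
    exact ⟨funext fun i => Fin.cases h₀ (congrFun htail) i, hST⟩

section Counting

variable {p : List ℕ → Prop} {s : ℕ}

theorem ncard_multiOccurs_eq_ncard_blocks (ws : Fin s → List ℕ) :
    {σ | p σ ∧ MultiOccurs ws σ}.ncard =
      {q : (Fin s → List ℕ) × List ℕ |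
        (∀ i, OccursOnlyAtEnd (ws i) (q.1 i)) ∧ p (joinBlocks q.1 q.2)}.ncard := by
  have himage : {σ | p σ ∧ MultiOccurs ws σ} = (fun q => joinBlocks q.1 q.2) ''
      {q : (Fin s → List ℕ) × List ℕ |
        (∀ i, OccursOnlyAtEnd (ws i) (q.1 i)) ∧ p (joinBlocks q.1 q.2)} := by
    ext σ
    simp only [Set.mem_image, Prod.exists, multiOccurs_iff_exists_joinBlocks]
    constructor
    · rintro ⟨hσ, P, S, hP, rfl⟩
      exact ⟨P, S, ⟨hP, hσ⟩, rfl⟩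
    · rintro ⟨P, S, ⟨hP, hσ⟩, rfl⟩
      exact ⟨hσ, P, S, hP, rfl⟩
  rw [himage, Set.InjOn.ncard_image]
  rintro ⟨P, S⟩ ⟨hP, -⟩ ⟨Q, T⟩ ⟨hQ, -⟩ h
  obtain ⟨rfl, rfl⟩ := joinBlocks_inj hP hQ h
  rfl

theorem ncard_multiOccurs_comp_perm (hp : ∀ {σ τ : List ℕ}, σ.Perm τ → (p σ ↔ p τ))
    (ws : Fin s → List ℕ) (π : Equiv.Perm (Fin s)) :
    {σ | p σ ∧ MultiOccurs ws σ}.ncard = {σ | p σ ∧ MultiOccurs (ws ∘ π) σ}.ncard := by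
  rw [ncard_multiOccurs_eq_ncard_blocks, ncard_multiOccurs_eq_ncard_blocks]
  let f : (Fin s → List ℕ) × List ℕ → (Fin s → List ℕ) × List ℕ := fun q => (q.1 ∘ π.symm, q.2)
  have hf : f.Injective := π.symm.surjective.injective_comp_right.prodMap Function.injective_id
  have hf_range : ∀ q, q ∈ Set.range f := fun q =>
    ⟨(q.1 ∘ π, q.2), by simp [f, Function.comp_assoc]⟩
  rw [← Set.ncard_preimage_of_injective_subset_range hf fun q _ => hf_range q]
  congr 1
  ext ⟨P, S⟩
  simp only [Set.mem_preimage, Set.mem_ofPred_eq, Function.comp_apply, f]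
  refine and_congr ⟨fun h i => by simpa using h (π i), fun h i => by simpa using h (π.symm i)⟩
    (hp (joinBlocks_comp_perm P S π.symm))

theorem ncard_not_multiOccurs_comp_perm (hp : ∀ {σ τ : List ℕ}, σ.Perm τ → (p σ ↔ p τ))
    (hfin : {σ | p σ}.Finite) (ws : Fin s → List ℕ) (π : Equiv.Perm (Fin s)) :
    {σ | p σ ∧ ¬ MultiOccurs ws σ}.ncard = {σ | p σ ∧ ¬ MultiOccurs (ws ∘ π) σ}.ncard := by
  have hsplit (ws' : Fin s → List ℕ) : {σ | p σ ∧ MultiOccurs ws' σ}.ncard +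
      {σ | p σ ∧ ¬ MultiOccurs ws' σ}.ncard = {σ | p σ}.ncard :=
    Set.ncard_inter_add_ncard_sdiff_eq_ncard {σ | p σ} {σ | MultiOccurs ws' σ} hfin
  have := ncard_multiOccurs_comp_perm hp ws π
  have := hsplit ws
  have := hsplit (ws ∘ π)
  omega

end Counting

theorem isCompOf_iff_of_perm {A : Finset ℕ} {n m : ℕ} {σ τ : List ℕ} (h : σ.Perm τ) :
    IsCompOf A n m σ ↔ IsCompOf A n m τ := by
  simp only [IsCompOf, h.mem_iff, h.sum_eq, h.length_eq]

theorem setOf_isCompOf_finite (A : Finset ℕ) (n m : ℕ) : {σ | IsCompOf A n m σ}.Finite := by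
  refine ((List.finite_length_eq A m).image (List.map Subtype.val)).subset ?_
  rintro σ ⟨hA, -, rfl⟩
  lift σ to List A using hA
  exact ⟨σ, (List.length_map _).symm, rfl⟩

theorem stmt14_general {s : ℕ} (ws : Fin s → List ℕ)
    (π : Equiv.Perm (Fin s)) :
    ∀ (A : Finset ℕ), (∀ a ∈ A, 0 < a) → ∀ n m : ℕ,
      Set.ncard {σ : List ℕ | IsCompOf A n m σ ∧ ¬ MultiOccurs ws σ}
        = Set.ncard {σ : List ℕ | IsCompOf A n m σ ∧ ¬ MultiOccurs (ws ∘ π) σ} :=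
  fun A _ n m =>
    ncard_not_multiOccurs_comp_perm isCompOf_iff_of_perm (setOf_isCompOf_finite A n m) ws π

theorem stmt14 {s : ℕ} (ws : Fin s → List ℕ)
    (hw : ∀ i, ws i ≠ []) (hwpos : ∀ i, ∀ x ∈ ws i, 0 < x)
    (π : Equiv.Perm (Fin s)) :
    ∀ (A : Finset ℕ), (∀ a ∈ A, 0 < a) → ∀ n m : ℕ,
      Set.ncard {σ : List ℕ | IsCompOf A n m σ ∧ ¬ MultiOccurs ws σ}
        = Set.ncard {σ : List ℕ | IsCompOf A n m σ ∧ ¬ MultiOccurs (ws ∘ π) σ} :=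
  stmt14_general ws π
end

section
/- Let A be a finite nonempty set of positive integers and let τ be a nonempty consecutive pattern (a word over a partially ordered alphabet). Then in ℚ⟦x,y,t⟧: ( Σ_{n,m≥0} ( Σ_{σ∈C_{n;m}^A} t^{τ-nlap(σ)} ) x^n y^m ) · ( 1 − t·[ ( y·Σ_{a∈A} x^a − 1 )·C_τ^A(x,y) + 1 ] ) = C_τ^A(x,y). -/
/-- An occurrence, starting at position `i`, of the consecutive pattern
`p : Fin ℓ → α` (a word over a partially ordered alphabet `α`) in `σ`. -/
def OccAt {α : Type*} [PartialOrder α] {ℓ : ℕ} (p : Fin ℓ → α)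
    (σ : List ℕ) (i : ℕ) : Prop :=
  i + ℓ ≤ σ.length ∧ ∀ s t : Fin ℓ,
    (p s < p t → σ.getD (i + s) 0 < σ.getD (i + t) 0) ∧
    (p s = p t → σ.getD (i + s) 0 = σ.getD (i + t) 0)

/-- `σ` avoids the consecutive pattern `p`. -/
def AvoidsPat {α : Type*} [PartialOrder α] {ℓ : ℕ} (p : Fin ℓ → α)
    (σ : List ℕ) : Prop :=
  ∀ i : ℕ, ¬ OccAt p σ i

/-- `τ-nlap σ`: the maximum number of pairwise non-overlapping occurrences of the
consecutive pattern `p` in `σ` (occurrences overlap iff they share a position). -/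
noncomputable def nlap {α : Type*} [PartialOrder α] {ℓ : ℕ} (p : Fin ℓ → α)
    (σ : List ℕ) : ℕ :=
  sSup {k : ℕ | ∃ S : Finset ℕ, S.card = k ∧ (∀ i ∈ S, OccAt p σ i) ∧
    ∀ i ∈ S, ∀ j ∈ S, i ≠ j → i + ℓ ≤ j ∨ j + ℓ ≤ i}

/-!
Call a composition a block if `τ` occurs at its first position and nowhere else. Let `G`, `C`, `B`
be the generating functions (with `t` marking `τ-nlap`) of all compositions, of the `τ`-avoiding
ones and of the blocks. Cutting a composition that does not avoid `τ` right before its last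
occurrence of `τ` gives a composition whose `τ-nlap` is one less, followed by a block, whence
`G = C + t·G·B`. Removing the first part of a composition whose tail avoids `τ` gives
`B + C = 1 + y·(∑ₐ xᵃ)·C`. Eliminating `B` from the two identities gives the theorem.
-/

section CountingSeries
open MvPowerSeries Finset

variable {σ ι κ : Type*}

-- an infinite fibre counts as `0`, so the lemmas below assume the fibres finite
noncomputable def countingSeries (S : Set ι) (w : ι → σ →₀ ℕ) : MvPowerSeries σ ℚ :=
  fun d => ({i ∈ S | w i = d}.ncard : ℚ)

theorem coeff_countingSeries (S : Set ι) (w : ι → σ →₀ ℕ) (d : σ →₀ ℕ) :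
    coeff d (countingSeries S w) = ({i ∈ S | w i = d}.ncard : ℚ) := rfl

theorem countingSeries_congr {S : Set ι} {w w' : ι → σ →₀ ℕ} (h : Set.EqOn w w' S) :
    countingSeries S w = countingSeries S w' := by
  ext d
  rw [coeff_countingSeries, coeff_countingSeries, Set.sep_ext_iff.2 fun i hi => by rw [h hi]]

theorem countingSeries_union {S T : Set ι} {w : ι → σ →₀ ℕ} (hST : Disjoint S T)
    (hS : ∀ d, {i ∈ S | w i = d}.Finite) (hT : ∀ d, {i ∈ T | w i = d}.Finite) :
    countingSeries (S ∪ T) w = countingSeries S w + countingSeries T w := by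
  ext d
  have : {i ∈ S ∪ T | w i = d} = {i ∈ S | w i = d} ∪ {i ∈ T | w i = d} := by
    ext i; simp [or_and_right]
  rw [map_add, coeff_countingSeries, coeff_countingSeries, coeff_countingSeries, this,
    Set.ncard_union_eq (hST.mono (Set.sep_subset _ _) (Set.sep_subset _ _)) (hS d) (hT d),
    Nat.cast_add]

theorem countingSeries_image {S : Set ι} {f : ι → κ} (hf : Set.InjOn f S) (w : κ → σ →₀ ℕ) :
    countingSeries (f '' S) w = countingSeries S (w ∘ f) := by
  ext d
  have : {x ∈ f '' S | w x = d} = f '' {i ∈ S | w (f i) = d} := by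
    ext x; simp only [Set.mem_sep_iff, Set.mem_image]; grind
  rw [coeff_countingSeries, coeff_countingSeries, this, (hf.mono (Set.sep_subset _ _)).ncard_image]
  rfl

theorem countingSeries_weight_add_const (S : Set ι) (w : ι → σ →₀ ℕ) (e : σ →₀ ℕ) :
    countingSeries S (fun i => w i + e) = monomial e 1 * countingSeries S w := by
  ext d
  rw [coeff_monomial_mul, coeff_countingSeries, coeff_countingSeries]
  split_ifs with he
  · simp only [one_mul, eq_tsub_iff_add_eq_of_le he]
  · have : {i ∈ S | w i + e = d} = ∅ := by
      ext i
      simp only [Set.mem_sep_iff, Set.mem_empty_iff_false, iff_false, not_and]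
      rintro - rfl
      exact he le_add_self
    simp [this]

theorem countingSeries_prod {S : Set ι} {T : Set κ} {w₁ : ι → σ →₀ ℕ} {w₂ : κ → σ →₀ ℕ}
    (hS : ∀ d, {i ∈ S | w₁ i = d}.Finite) (hT : ∀ d, {j ∈ T | w₂ j = d}.Finite) :
    countingSeries (S ×ˢ T) (fun x => w₁ x.1 + w₂ x.2) =
      countingSeries S w₁ * countingSeries T w₂ := by
  classical
  ext d
  set F : (σ →₀ ℕ) × (σ →₀ ℕ) → Set (ι × κ) :=
    fun q => {i ∈ S | w₁ i = q.1} ×ˢ {j ∈ T | w₂ j = q.2}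
  have hfiber : {x ∈ S ×ˢ T | w₁ x.1 + w₂ x.2 = d} = ⋃ q ∈ (antidiagonal d : Set _), F q := by
    ext ⟨i, j⟩
    simp only [F, Set.mem_prod, Set.mem_iUnion, mem_coe, HasAntidiagonal.mem_antidiagonal,
      exists_prop, Prod.exists, Set.mem_sep_iff]
    grind
  have hdisj : (antidiagonal d : Set _).PairwiseDisjoint F := by
    rintro q - q' - hqq'
    refine Set.disjoint_left.2 fun x hx hx' => hqq' ?_
    simp only [F, Set.mem_prod, Set.mem_sep_iff] at hx hx'
    exact Prod.ext (hx.1.2.symm.trans hx'.1.2) (hx.2.2.symm.trans hx'.2.2)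
  rw [coeff_countingSeries, coeff_mul, hfiber, Set.Finite.ncard_biUnion (finite_toSet _)
    (fun q _ => (hS _).prod (hT _)) hdisj, finsum_mem_coe_finset]
  simp [coeff_countingSeries, Set.ncard_prod]

theorem countingSeries_finset (s : Finset ι) (w : ι → σ →₀ ℕ) :
    countingSeries (s : Set ι) w = ∑ i ∈ s, monomial (w i) 1 := by
  classical
  ext d
  have : {i ∈ (s : Set ι) | w i = d} = ↑(s.filter (w · = d)) := by ext; simp
  rw [coeff_countingSeries, map_sum, this, Set.ncard_coe_finset]
  simp [coeff_monomial, Finset.sum_boole, eq_comm]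

end CountingSeries

section Occurrences
variable {α : Type*} [PartialOrder α] {ℓ : ℕ} (p : Fin ℓ → α)

theorem occAt_append_left {ρ β : List ℕ} {i : ℕ} (h : i + ℓ ≤ ρ.length) :
    OccAt p (ρ ++ β) i ↔ OccAt p ρ i := by
  have hget : ∀ s : Fin ℓ, (ρ ++ β).getD (i + s) 0 = ρ.getD (i + s) 0 := fun s =>
    List.getD_append _ _ _ _ (by omega)
  simp only [OccAt, hget, List.length_append]
  constructor <;> rintro ⟨-, h'⟩ <;> exact ⟨by omega, h'⟩

theorem occAt_append_right (ρ β : List ℕ) (i : ℕ) :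
    OccAt p (ρ ++ β) (ρ.length + i) ↔ OccAt p β i := by
  have hget : ∀ s : Fin ℓ, (ρ ++ β).getD (ρ.length + i + s) 0 = β.getD (i + s) 0 := fun s => by
    rw [List.getD_append_right _ _ _ _ (by omega)]
    congr 1
    omega
  simp only [OccAt, hget, List.length_append]
  constructor <;> rintro ⟨h, h'⟩ <;> exact ⟨by omega, h'⟩

theorem occAt_cons_succ (a : ℕ) (σ : List ℕ) (i : ℕ) :
    OccAt p (a :: σ) (i + 1) ↔ OccAt p σ i := by
  rw [add_comm]
  exact occAt_append_right p [a] σ i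

theorem occAt_drop {σ : List ℕ} {j : ℕ} (hj : j ≤ σ.length) (i : ℕ) :
    OccAt p (σ.drop j) i ↔ OccAt p σ (j + i) := by
  have := occAt_append_right p (σ.take j) (σ.drop j) i
  rwa [List.take_append_drop, List.length_take_of_le hj, Iff.comm] at this

theorem avoidsPat_nil (hℓ : 0 < ℓ) : AvoidsPat p [] := fun i h => by
  have := h.1
  simp only [List.length_nil] at this
  omega

end Occurrences

section Packings
variable {α : Type*} [PartialOrder α] {ℓ : ℕ} {p : Fin ℓ → α}

variable (p) in
def IsPacking (σ : List ℕ) (S : Finset ℕ) : Prop :=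
  (∀ i ∈ S, OccAt p σ i) ∧ ∀ i ∈ S, ∀ j ∈ S, i ≠ j → i + ℓ ≤ j ∨ j + ℓ ≤ i

theorem IsPacking.card_le_length (hℓ : 0 < ℓ) {σ : List ℕ} {S : Finset ℕ}
    (h : IsPacking p σ S) : S.card ≤ σ.length := by
  calc S.card ≤ (Finset.range σ.length).card :=
        Finset.card_le_card fun i hi => Finset.mem_range.2 (by have := (h.1 i hi).1; omega)
    _ = σ.length := Finset.card_range _

theorem IsPacking.append {ρ : List ℕ} {S : Finset ℕ} (h : IsPacking p ρ S) (β : List ℕ) :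
    IsPacking p (ρ ++ β) S :=
  ⟨fun i hi => (occAt_append_left p (h.1 i hi).1).2 (h.1 i hi), h.2⟩

theorem bddAbove_nlap (hℓ : 0 < ℓ) (σ : List ℕ) :
    BddAbove {k : ℕ | ∃ S : Finset ℕ, S.card = k ∧ IsPacking p σ S} :=
  ⟨σ.length, by rintro _ ⟨S, rfl, hS⟩; exact hS.card_le_length hℓ⟩

theorem IsPacking.card_le_nlap (hℓ : 0 < ℓ) {σ : List ℕ} {S : Finset ℕ}
    (h : IsPacking p σ S) : S.card ≤ nlap p σ :=
  le_csSup (bddAbove_nlap hℓ σ) ⟨S, rfl, h⟩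

theorem exists_isPacking_card_eq_nlap (hℓ : 0 < ℓ) (σ : List ℕ) :
    ∃ S, IsPacking p σ S ∧ S.card = nlap p σ := by
  have hmem : nlap p σ ∈ {k : ℕ | ∃ S : Finset ℕ, S.card = k ∧ IsPacking p σ S} :=
    Nat.sSup_mem ⟨0, ∅, rfl, by simp [IsPacking]⟩ (bddAbove_nlap hℓ σ)
  obtain ⟨S, hcard, hS⟩ := hmem
  exact ⟨S, hS, hcard⟩

theorem nlap_eq_zero_of_avoidsPat (hℓ : 0 < ℓ) {σ : List ℕ} (h : AvoidsPat p σ) :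
    nlap p σ = 0 := by
  obtain ⟨S, hS, hcard⟩ := exists_isPacking_card_eq_nlap (p := p) hℓ σ
  rw [← hcard, Finset.card_eq_zero, Finset.eq_empty_iff_forall_notMem]
  exact fun i hi => h i (hS.1 i hi)

end Packings

section Blocks
variable {α : Type*} [PartialOrder α] {ℓ : ℕ} {p : Fin ℓ → α}

variable (p) in
def IsBlock (β : List ℕ) : Prop :=
  OccAt p β 0 ∧ AvoidsPat p β.tail

theorem IsBlock.occAt_append {β : List ℕ} (hβ : IsBlock p β) (ρ : List ℕ) :
    OccAt p (ρ ++ β) ρ.length :=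
  (occAt_append_right p ρ β 0).2 hβ.1

theorem IsBlock.le_of_occAt_append {ρ β : List ℕ} (hβ : IsBlock p β) {i : ℕ}
    (h : OccAt p (ρ ++ β) i) : i ≤ ρ.length := by
  by_contra! hi
  obtain ⟨j, rfl⟩ : ∃ j, i = ρ.length + (j + 1) := ⟨i - ρ.length - 1, by omega⟩
  rw [occAt_append_right] at h
  cases β with
  | nil => have := h.1; simp at this
  | cons b β' => exact hβ.2 j ((occAt_cons_succ p b β' j).1 h)

theorem nlap_append_of_isBlock (hℓ : 0 < ℓ) (ρ : List ℕ) {β : List ℕ} (hβ : IsBlock p β) :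
    nlap p (ρ ++ β) = nlap p ρ + 1 := by
  apply le_antisymm
  · obtain ⟨S, hS, hcard⟩ := exists_isPacking_card_eq_nlap (p := p) hℓ (ρ ++ β)
    rcases S.eq_empty_or_nonempty with rfl | hne
    · simp [← hcard]
    set M := S.max' hne
    have hM : M ∈ S := S.max'_mem hne
    have hMρ : M ≤ ρ.length := hβ.le_of_occAt_append (hS.1 M hM)
    -- every other occurrence ends before `M ≤ ρ.length`
    have hρ : IsPacking p ρ (S.erase M) := by
      refine ⟨fun i hi => ?_, fun i hi j hj => hS.2 i (S.mem_of_mem_erase hi) j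
        (S.mem_of_mem_erase hj)⟩
      have hiM : i + ℓ ≤ M := by
        have := hS.2 i (S.mem_of_mem_erase hi) M hM (S.ne_of_mem_erase hi)
        have := S.le_max' i (S.mem_of_mem_erase hi)
        omega
      exact (occAt_append_left p (by omega)).1 (hS.1 i (S.mem_of_mem_erase hi))
    have := hρ.card_le_nlap hℓ
    rw [Finset.card_erase_of_mem hM] at this
    omega
  · obtain ⟨S, hS, hcard⟩ := exists_isPacking_card_eq_nlap (p := p) hℓ ρ
    have hend : ∀ i ∈ S, i + ℓ ≤ ρ.length := fun i hi => (hS.1 i hi).1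
    have hnot : ρ.length ∉ S := fun h => by have := hend _ h; omega
    have hpack : IsPacking p (ρ ++ β) (insert ρ.length S) := by
      refine ⟨fun i hi => ?_, fun i hi j hj hij => ?_⟩
      · rcases Finset.mem_insert.1 hi with rfl | hi
        exacts [hβ.occAt_append ρ, (hS.append β).1 i hi]
      · rcases Finset.mem_insert.1 hi with rfl | hi <;>
          rcases Finset.mem_insert.1 hj with rfl | hj
        exacts [absurd rfl hij, Or.inr (hend j hj), Or.inl (hend i hi), hS.2 i hi j hj hij]
    have := hpack.card_le_nlap hℓ
    rwa [Finset.card_insert_of_notMem hnot, hcard] at this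

theorem exists_eq_append_isBlock (hℓ : 0 < ℓ) {σ : List ℕ} (h : ¬ AvoidsPat p σ) :
    ∃ ρ β, IsBlock p β ∧ σ = ρ ++ β := by
  classical
  obtain ⟨i, hi⟩ : ∃ i, OccAt p σ i := by simpa [AvoidsPat] using h
  set J := Nat.findGreatest (OccAt p σ) σ.length
  have hJ : OccAt p σ J := Nat.findGreatest_spec (by have := hi.1; omega) hi
  have hlast : ∀ k, OccAt p σ k → k ≤ J := fun k hk =>
    Nat.le_findGreatest (by have := hk.1; omega) hk
  have hJlen : J + 1 ≤ σ.length := by have := hJ.1; omega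
  refine ⟨σ.take J, σ.drop J, ⟨?_, fun k hk => ?_⟩, (List.take_append_drop J σ).symm⟩
  · rw [occAt_drop p (by omega), add_zero]
    exact hJ
  · rw [List.tail_drop, occAt_drop p hJlen] at hk
    have := hlast _ hk
    omega

theorem injOn_append_isBlock :
    Set.InjOn (fun x : List ℕ × List ℕ => x.1 ++ x.2) {x | IsBlock p x.2} := by
  rintro ⟨ρ, β⟩ (hβ : IsBlock p β) ⟨ρ', β'⟩ (hβ' : IsBlock p β') (h : ρ ++ β = ρ' ++ β')
  have hlen : ρ.length = ρ'.length :=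
    le_antisymm (hβ'.le_of_occAt_append (h ▸ hβ.occAt_append ρ))
      (hβ.le_of_occAt_append (h.symm ▸ hβ'.occAt_append ρ'))
  obtain ⟨rfl, rfl⟩ := List.append_inj h hlen
  rfl

theorem isBlock_or_avoidsPat_cons_iff (a : ℕ) (τ : List ℕ) :
    IsBlock p (a :: τ) ∨ AvoidsPat p (a :: τ) ↔ AvoidsPat p τ := by
  constructor
  · rintro (hb | hav)
    · exact hb.2
    · exact fun i hi => hav (i + 1) ((occAt_cons_succ p a τ i).2 hi)
  · intro hτ
    by_cases h0 : OccAt p (a :: τ) 0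
    · exact Or.inl ⟨h0, hτ⟩
    · refine Or.inr fun i hi => ?_
      cases i with
      | zero => exact h0 hi
      | succ i => exact hτ i ((occAt_cons_succ p a τ i).1 hi)

end Blocks

section Exponents
open Finsupp MvPowerSeries

noncomputable def xytExp (n m r : ℕ) : Fin 3 →₀ ℕ :=
  single 0 n + single 1 m + single 2 r

@[simp] theorem xytExp_apply_zero (n m r : ℕ) : xytExp n m r 0 = n := by simp [xytExp]
@[simp] theorem xytExp_apply_one (n m r : ℕ) : xytExp n m r 1 = m := by simp [xytExp]
@[simp] theorem xytExp_apply_two (n m r : ℕ) : xytExp n m r 2 = r := by simp [xytExp]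

theorem eq_xytExp (d : Fin 3 →₀ ℕ) : d = xytExp (d 0) (d 1) (d 2) := by
  ext i
  fin_cases i <;> simp

theorem xytExp_inj {n m r n' m' r' : ℕ} :
    xytExp n m r = xytExp n' m' r' ↔ n = n' ∧ m = m' ∧ r = r' := by
  refine ⟨fun h => ⟨?_, ?_, ?_⟩, by rintro ⟨rfl, rfl, rfl⟩; rfl⟩ <;>
    [simpa using congr($h 0); simpa using congr($h 1); simpa using congr($h 2)]

theorem xytExp_add (n m r n' m' r' : ℕ) :
    xytExp n m r + xytExp n' m' r' = xytExp (n + n') (m + m') (r + r') := by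
  rw [eq_xytExp (_ + _)]
  simp

theorem monomial_xytExp {R : Type*} [CommSemiring R] (n m r : ℕ) :
    monomial (xytExp n m r) (1 : R) = X 0 ^ n * X 1 ^ m * X 2 ^ r := by
  simp only [xytExp, X_pow_eq, monomial_mul_monomial, mul_one]

theorem MvPowerSeries.ext_xytExp {R : Type*} [Semiring R] {f g : MvPowerSeries (Fin 3) R}
    (h : ∀ n m r, coeff (xytExp n m r) f = coeff (xytExp n m r) g) : f = g :=
  ext fun d => by rw [eq_xytExp d]; exact h _ _ _

end Exponents

section Compositions
open MvPowerSeries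

variable {α : Type*} [PartialOrder α] {ℓ : ℕ} (p : Fin ℓ → α) (A : Finset ℕ)

def compositions : Set (List ℕ) := {σ | ∀ x ∈ σ, x ∈ A}

noncomputable def compWeight (σ : List ℕ) : Fin 3 →₀ ℕ := xytExp σ.sum σ.length 0

noncomputable def nlapWeight (σ : List ℕ) : Fin 3 →₀ ℕ := xytExp σ.sum σ.length (nlap p σ)

theorem compWeight_cons (a : ℕ) (τ : List ℕ) :
    compWeight (a :: τ) = xytExp a 1 0 + compWeight τ := by
  simp only [compWeight, xytExp_add, List.sum_cons, List.length_cons, add_comm τ.length]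

variable {A}

theorem append_mem_compositions {ρ β : List ℕ} (hρ : ρ ∈ compositions A)
    (hβ : β ∈ compositions A) : ρ ++ β ∈ compositions A := by
  simpa [compositions, or_imp, forall_and] using And.intro hρ hβ

theorem finite_fiber_of_subset_compositions {S : Set (List ℕ)} (hS : S ⊆ compositions A)
    {w : List ℕ → Fin 3 →₀ ℕ} (hw : ∀ σ, w σ 1 = σ.length) (d : Fin 3 →₀ ℕ) :
    {σ ∈ S | w σ = d}.Finite := by
  refine ((List.finite_length_eq A (d 1)).image (List.map Subtype.val)).subset ?_
  rintro σ ⟨hσ, rfl⟩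
  have hσA : ∀ x ∈ σ, x ∈ A := hS hσ
  exact ⟨σ.pmap Subtype.mk hσA, by simp [hw], by simp [List.map_pmap]⟩

variable (A)

theorem countingSeries_isBlock_add_avoidsPat (hℓ : 0 < ℓ) :
    countingSeries {σ ∈ compositions A | IsBlock p σ} compWeight
      + countingSeries {σ ∈ compositions A | AvoidsPat p σ} compWeight
      = 1 + X 1 * (∑ a ∈ A, X 0 ^ a)
          * countingSeries {σ ∈ compositions A | AvoidsPat p σ} compWeight := by
  have hfin := fun {S} (hS : S ⊆ compositions A) =>
    finite_fiber_of_subset_compositions hS (w := compWeight) (by simp [compWeight])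
  have hsplit : {σ ∈ compositions A | IsBlock p σ} ∪ {σ ∈ compositions A | AvoidsPat p σ}
      = {[]} ∪ (fun x => x.1 :: x.2) '' ((A : Set ℕ) ×ˢ {σ ∈ compositions A | AvoidsPat p σ}) := by
    ext (_ | ⟨a, τ⟩)
    · simp [avoidsPat_nil p hℓ, compositions]
    · simp [compositions, ← isBlock_or_avoidsPat_cons_iff (p := p) a τ, and_or_left, and_assoc]
  have hblocks : Disjoint {σ ∈ compositions A | IsBlock p σ}
      {σ ∈ compositions A | AvoidsPat p σ} :=
    Set.disjoint_left.2 fun σ hb hav => hav.2 0 hb.2.1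
  have hnil : Disjoint ({[]} : Set (List ℕ))
      ((fun x => x.1 :: x.2) '' ((A : Set ℕ) ×ˢ {σ ∈ compositions A | AvoidsPat p σ})) := by
    simp
  have hcons : (fun x => x.1 :: x.2) '' ((A : Set ℕ) ×ˢ {σ ∈ compositions A | AvoidsPat p σ})
      ⊆ compositions A := by
    rintro _ ⟨⟨a, τ⟩, ⟨ha, hτ, -⟩, rfl⟩
    exact List.forall_mem_cons.2 ⟨ha, hτ⟩
  rw [← countingSeries_union hblocks (hfin (Set.sep_subset _ _)) (hfin (Set.sep_subset _ _)),
    hsplit, countingSeries_union hnil (hfin (by simp [compositions])) (hfin hcons),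
    countingSeries_image (fun x _ y _ h => Prod.ext_iff.2 (List.cons_eq_cons.1 h)),
    countingSeries_congr (w := compWeight ∘ fun x : ℕ × List ℕ => x.1 :: x.2)
      (w' := fun x => xytExp x.1 1 0 + compWeight x.2)
      fun x _ => compWeight_cons x.1 x.2,
    countingSeries_prod (w₁ := fun a => xytExp a 1 0) (fun _ => A.finite_toSet.subset (Set.sep_subset _ _))
      (hfin (Set.sep_subset _ _)),
    ← Finset.coe_singleton, countingSeries_finset, countingSeries_finset]
  have hnilWeight : compWeight [] = 0 := by simp [compWeight, xytExp]
  simp only [Finset.sum_singleton, hnilWeight, monomial_zero_one, monomial_xytExp, pow_zero,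
    pow_one, mul_one, ← Finset.sum_mul]
  ring

theorem nlapWeight_append_of_isBlock (hℓ : 0 < ℓ) (ρ : List ℕ) {β : List ℕ}
    (hβ : IsBlock p β) :
    nlapWeight p (ρ ++ β) = nlapWeight p ρ + compWeight β + xytExp 0 0 1 := by
  simp only [nlapWeight, compWeight, nlap_append_of_isBlock hℓ ρ hβ, xytExp_add, List.sum_append,
    List.length_append, add_zero]

theorem countingSeries_nlapWeight (hℓ : 0 < ℓ) :
    countingSeries (compositions A) (nlapWeight p)
      = countingSeries {σ ∈ compositions A | AvoidsPat p σ} compWeight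
        + X 2 * (countingSeries (compositions A) (nlapWeight p)
          * countingSeries {σ ∈ compositions A | IsBlock p σ} compWeight) := by
  have hfin := fun {S} (hS : S ⊆ compositions A) =>
    finite_fiber_of_subset_compositions hS (w := nlapWeight p) (by simp [nlapWeight])
  set cut := (fun x : List ℕ × List ℕ => x.1 ++ x.2) ''
    (compositions A ×ˢ {σ ∈ compositions A | IsBlock p σ})
  have hcut : cut ⊆ compositions A := by
    rintro _ ⟨⟨ρ, β⟩, ⟨hρ, hβ, -⟩, rfl⟩
    exact append_mem_compositions hρ hβ
  have hsplit : compositions A = {σ ∈ compositions A | AvoidsPat p σ} ∪ cut := by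
    refine subset_antisymm (fun σ hσ => ?_) (Set.union_subset (Set.sep_subset _ _) hcut)
    by_cases hav : AvoidsPat p σ
    · exact Or.inl ⟨hσ, hav⟩
    obtain ⟨ρ, β, hβ, rfl⟩ := exists_eq_append_isBlock hℓ hav
    exact Or.inr ⟨(ρ, β), ⟨fun x hx => hσ x (List.mem_append_left β hx),
      fun x hx => hσ x (List.mem_append_right ρ hx), hβ⟩, rfl⟩
  have hdisj : Disjoint {σ ∈ compositions A | AvoidsPat p σ} cut := by
    rw [Set.disjoint_left]
    rintro _ ⟨-, hav⟩ ⟨⟨ρ, β⟩, ⟨-, -, hβ⟩, rfl⟩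
    exact hav _ (hβ.occAt_append ρ)
  conv_lhs => rw [hsplit]
  rw [countingSeries_union hdisj (hfin (Set.sep_subset _ _)) (hfin hcut),
    countingSeries_congr (w := nlapWeight p) (w' := compWeight) fun σ hσ => by
      simp [nlapWeight, compWeight, nlap_eq_zero_of_avoidsPat hℓ hσ.2],
    countingSeries_image (injOn_append_isBlock.mono fun x hx => hx.2.2),
    countingSeries_congr (w := nlapWeight p ∘ fun x : List ℕ × List ℕ => x.1 ++ x.2)
      (w' := fun x => nlapWeight p x.1 + compWeight x.2 + xytExp 0 0 1)
      fun x hx => nlapWeight_append_of_isBlock p hℓ x.1 hx.2.2,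
    countingSeries_weight_add_const, countingSeries_prod (hfin subset_rfl)
      (finite_fiber_of_subset_compositions (Set.sep_subset _ _) (by simp [compWeight])),
    monomial_xytExp]
  simp

end Compositions

section Identification
open MvPowerSeries

variable {α : Type*} [PartialOrder α] {ℓ : ℕ} (p : Fin ℓ → α) (A : Finset ℕ)

theorem coeff_countingSeries_nlapWeight (n m r : ℕ) :
    coeff (xytExp n m r) (countingSeries (compositions A) (nlapWeight p))
      = ({σ | IsCompOf A n m σ ∧ nlap p σ = r}.ncard : ℚ) := by
  rw [coeff_countingSeries]
  congr 2
  ext σ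
  simp [compositions, nlapWeight, xytExp_inj, IsCompOf, and_assoc]

theorem coeff_countingSeries_avoidsPat (n m r : ℕ) :
    coeff (xytExp n m r) (countingSeries {σ ∈ compositions A | AvoidsPat p σ} compWeight)
      = if r = 0 then ({σ | IsCompOf A n m σ ∧ AvoidsPat p σ}.ncard : ℚ) else 0 := by
  rw [coeff_countingSeries]
  split_ifs with hr
  · subst hr
    congr 2
    ext σ
    simp [compositions, compWeight, xytExp_inj, IsCompOf, and_assoc, and_comm, and_left_comm]
  · simp [compWeight, xytExp_inj, Ne.symm hr]

end Identification

open MvPowerSeries in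
theorem stmt15_general {α : Type*} [PartialOrder α] {ℓ : ℕ} (hℓ : 0 < ℓ) (p : Fin ℓ → α)
    (A : Finset ℕ)
    (G C : MvPowerSeries (Fin 3) ℚ)
    (hG : ∀ n m r : ℕ,
      (MvPowerSeries.coeff
          (Finsupp.single 0 n + Finsupp.single 1 m + Finsupp.single 2 r)) G
        = (Set.ncard {σ : List ℕ | IsCompOf A n m σ ∧ nlap p σ = r} : ℚ))
    (hC : ∀ n m r : ℕ,
      (MvPowerSeries.coeff
          (Finsupp.single 0 n + Finsupp.single 1 m + Finsupp.single 2 r)) C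
        = if r = 0
            then (Set.ncard {σ : List ℕ | IsCompOf A n m σ ∧ AvoidsPat p σ} : ℚ)
            else 0) :
    G * (1 - (X 2 : MvPowerSeries (Fin 3) ℚ) *
          (((X 1 : MvPowerSeries (Fin 3) ℚ) * (∑ a ∈ A, (X 0) ^ a) - 1) * C + 1))
      = C := by
  have hG' : G = countingSeries (compositions A) (nlapWeight p) := ext_xytExp fun n m r =>
    (hG n m r).trans (coeff_countingSeries_nlapWeight p A n m r).symm
  have hC' : C = countingSeries {σ ∈ compositions A | AvoidsPat p σ} compWeight :=
    ext_xytExp fun n m r => (hC n m r).trans (coeff_countingSeries_avoidsPat p A n m r).symm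
  have hB := countingSeries_isBlock_add_avoidsPat p A hℓ
  have hGB := countingSeries_nlapWeight p A hℓ
  rw [← hG', ← hC'] at hGB
  rw [← hC'] at hB
  linear_combination hGB + X 2 * G * hB

open MvPowerSeries in
theorem stmt15 {α : Type*} [PartialOrder α] {ℓ : ℕ} (hℓ : 0 < ℓ) (p : Fin ℓ → α)
    (A : Finset ℕ) (hA : A.Nonempty) (hpos : ∀ a ∈ A, 0 < a)
    (G C : MvPowerSeries (Fin 3) ℚ)
    (hG : ∀ n m r : ℕ,
      (MvPowerSeries.coeff
          (Finsupp.single 0 n + Finsupp.single 1 m + Finsupp.single 2 r)) G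
        = (Set.ncard {σ : List ℕ | IsCompOf A n m σ ∧ nlap p σ = r} : ℚ))
    (hC : ∀ n m r : ℕ,
      (MvPowerSeries.coeff
          (Finsupp.single 0 n + Finsupp.single 1 m + Finsupp.single 2 r)) C
        = if r = 0
            then (Set.ncard {σ : List ℕ | IsCompOf A n m σ ∧ AvoidsPat p σ} : ℚ)
            else 0) :
    G * (1 - (X 2 : MvPowerSeries (Fin 3) ℚ) *
          (((X 1 : MvPowerSeries (Fin 3) ℚ) * (∑ a ∈ A, (X 0) ^ a) - 1) * C + 1))
      = C :=
  stmt15_general hℓ p A G C hG hC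
end
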